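/- Let W^{[M]} = exp(∑_{2n+1≤M} α_{-(2n+1)}/(2n+1))·exp(-∑_{2n+1≤M} α_{2n+1}/(2n+1)) acting on the charge-zero fermionic Fock space, where α_k are the standard bosonic modes with [α_k, α_m] = k δ_{k+m,0} and α_k† = α_{-k}. Then (W^{[M]}†)^{-1} = exp(-∑_{n=0}^{⌊(M-1)/2⌋} 1/(2n+1))·W^{[M]}; consequently every matrix element of W^{[M]} between unit vectors is bounded by exp((1/2)∑_{n=0}^{⌊(M-1)/2⌋} 1/(2n+1)). -/

import Mathlib

/-!
The lowering operator `B` is a sum of partial derivatives, so `e^{sB}` is the substitution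
`T_c = varShift c : p_k ↦ p_k + c_k` with `c_k = s` for the odd `k ≤ M`. The adjoint of `T_c` is
multiplication by `E = exp (∑ c_k p_k / k)`, and since `T_c` is an algebra map,
`T_c E = e^κ E T_c` with `κ = ∑ c_k² / k`. Hence `⟨E f, E g⟩ = e^κ ⟨T_c f, T_c g⟩`; with `c = 1`
and `f = e^{-B} u` this is the first identity, with `c = -1` and `f = e^{B} u` the second. Since
`E f` is only a power series, the identity is proved coefficientwise: it factors over the modes,
where it reduces to Vandermonde's identity, and summing the exponential factor over all monomials
gives `e^κ`. The bound on matrix elements is Cauchy–Schwarz against the first identity.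
-/

/-- The bosonic Fock space `ℂ[p₁,p₂,…]` (real form), with variable `i` standing for
`p_{i+1}`. -/
abbrev FockPoly := MvPolynomial ℕ ℝ

/-- The lowering part `B = ∑_{2n+1 ≤ M} α_{2n+1}/(2n+1) = ∑_{2n+1 ≤ M} ∂/∂p_{2n+1}`
(here `α_k = k ∂/∂p_k` for `k > 0`). -/
noncomputable def lowerB (M : ℕ) : FockPoly →ₗ[ℝ] FockPoly :=
  ∑ i ∈ (Finset.range M).filter (fun i => Even i),
    (MvPolynomial.pderiv (R := ℝ) i).toLinearMap

/-- `exp(s·B) f`, a finite sum since `B` is locally nilpotent. -/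
noncomputable def expB (M : ℕ) (s : ℝ) (f : FockPoly) : FockPoly :=
  ∑ j ∈ Finset.range (f.totalDegree + 1),
    ((j.factorial : ℝ)⁻¹ * s ^ j) • ((lowerB M) ^ j) f

/-- The squared norm of the monomial `∏ p_{i+1}^{m i}`, making `α_k† = α_{-k}`:
`w(m) = ∏ (i+1)^{m i} (m i)!`. -/
noncomputable def wMon (m : ℕ →₀ ℕ) : ℝ :=
  ∏ i ∈ m.support, (((i : ℝ) + 1) ^ (m i) * ((m i).factorial : ℝ))

/-- The inner product on the Fock space in which `α_k† = α_{-k}`. -/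
noncomputable def ipF (f g : FockPoly) : ℝ :=
  ∑ᶠ m : ℕ →₀ ℕ, MvPolynomial.coeff m f * MvPolynomial.coeff m g * wMon m

/-- The matrix element `⟨W^{[M]} x, y⟩` of
`W^{[M]} = exp(∑_{2n+1≤M} α_{-(2n+1)}/(2n+1)) exp(-∑_{2n+1≤M} α_{2n+1}/(2n+1))`:
since `(∑ α_{-(2n+1)}/(2n+1))† = ∑ α_{2n+1}/(2n+1)`, one has
`⟨W x, y⟩ = ⟨e^{-B} x, e^{B} y⟩`. -/
noncomputable def WM (M : ℕ) (x y : FockPoly) : ℝ :=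
  ipF (expB M (-1) x) (expB M 1 y)

/-- The central constant `∑_{n=0}^{⌊(M-1)/2⌋} 1/(2n+1)`. -/
noncomputable def cM (M : ℕ) : ℝ :=
  ∑ n ∈ Finset.range ((M - 1) / 2 + 1), (1 : ℝ) / (2 * n + 1)

open Finset MvPolynomial
open scoped Nat

noncomputable section

section

variable {ι : Type*} [DecidableEq ι]

lemma Iic_eq_finsupp {a : ι →₀ ℕ} {U : Finset ι} (h : a.support ⊆ U) :
    Iic a = U.finsupp fun i => Iic (a i) := by
  ext x
  simp only [mem_Iic, mem_finsupp_iff, Finsupp.le_def]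
  constructor
  · intro hx
    refine ⟨fun i hi => h ?_, fun i _ => hx i⟩
    rw [Finsupp.mem_support_iff] at hi ⊢
    have := hx i; omega
  · rintro ⟨hU, hx⟩ i
    by_cases hi : i ∈ U
    · exact hx i hi
    · rw [Finsupp.notMem_support_iff.1 (fun h' => hi (hU h'))]; exact Nat.zero_le _

lemma prod_sum_Iic_eq_sum_Iic_prod {R : Type*} [CommSemiring R]
    (T : ι → ℕ → R) {a : ι →₀ ℕ} {U : Finset ι} (h : a.support ⊆ U) :
    ∏ i ∈ U, ∑ k ∈ Iic (a i), T i k = ∑ x ∈ Iic a, ∏ i ∈ U, T i (x i) := by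
  rw [prod_sum, Iic_eq_finsupp h, Finset.finsupp, sum_map]
  refine sum_congr (by congr!) fun p _ => ?_
  rw [← prod_attach U]
  refine prod_congr rfl fun i _ => ?_
  simp [Finsupp.indicator_of_mem i.2]

def jointProd (F : ι → ℕ → ℕ → ℝ) (a m : ι →₀ ℕ) : ℝ :=
  ∏ i ∈ a.support ∪ m.support, F i (a i) (m i)

lemma jointProd_eq_prod {F : ι → ℕ → ℕ → ℝ} (hF : ∀ i, F i 0 0 = 1) {a m : ι →₀ ℕ}
    {U : Finset ι} (h : a.support ∪ m.support ⊆ U) :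
    jointProd F a m = ∏ i ∈ U, F i (a i) (m i) := by
  refine prod_subset h fun i _ hi => ?_
  simp only [mem_union, Finsupp.mem_support_iff, not_or, not_not] at hi
  rw [hi.1, hi.2, hF]

lemma jointProd_eq_zero {F : ι → ℕ → ℕ → ℝ} (hF : ∀ i A K, K < A → F i A K = 0)
    {a m : ι →₀ ℕ} (h : ¬ a ≤ m) : jointProd F a m = 0 := by
  obtain ⟨i, hi⟩ := not_forall.1 (mt Finsupp.le_def.2 h)
  refine prod_eq_zero (mem_union_left _ (Finsupp.mem_support_iff.2 ?_)) (hF i _ _ (not_le.1 hi))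
  omega

lemma hasSum_prod_pow_div_factorial (r : ι → ℝ) (hr : ∀ i, 0 ≤ r i) (S : Finset ι) :
    HasSum (fun t : ι →₀ ℕ => if t.support ⊆ S then t.prod (fun i k => r i ^ k / k !) else 0)
      (∏ i ∈ S, Real.exp (r i)) := by
  have hterm : ∀ i k, 0 ≤ r i ^ k / k ! := fun i k =>
    div_nonneg (pow_nonneg (hr i) k) (by positivity)
  induction S using Finset.induction with
  | empty =>
    convert hasSum_single (0 : ι →₀ ℕ) fun t ht => if_neg ?_ using 1
    · simp
    · simpa [Finset.subset_empty] using ht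
  | insert j S hj ih =>
    set F := fun t : ι →₀ ℕ => if t.support ⊆ S then t.prod (fun i k => r i ^ k / k !) else 0
    have hexp : HasSum (fun k : ℕ => r j ^ k / k !) (Real.exp (r j)) := by
      simpa [Real.exp_eq_exp_ℝ] using NormedSpace.expSeries_div_hasSum_exp (r j)
    have hF : 0 ≤ F := fun t => by
      dsimp only [F]; split_ifs
      exacts [prod_nonneg fun i _ => hterm i _, le_rfl]
    have hF0 : ∀ u, u j ≠ 0 → F u = 0 := fun u hu =>
      if_neg fun h => hj (h (Finsupp.mem_support_iff.2 hu))
    have hprod := hexp.mul ih (hexp.summable.mul_of_nonneg ih.summable (hterm j) hF)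
    rw [prod_insert hj]
    -- Splitting `t` into `(t j, t.erase j)` turns the sum into a product of two sums.
    have hinj : Function.Injective fun t : ι →₀ ℕ => (t j, t.erase j) := by
      intro t t' h
      simp only [Prod.mk.injEq] at h
      rw [← Finsupp.single_add_erase j t, ← Finsupp.single_add_erase j t', h.1, h.2]
    refine ((hinj.hasSum_iff ?_).2 hprod).congr_fun fun t => ?_
    · rintro ⟨k, u⟩ hku
      have : u j ≠ 0 := fun huj => hku ⟨Finsupp.single j k + u, by simp [huj]⟩
      simp [hF0 u this]
    · dsimp only [F, Function.comp_apply]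
      simp only [Finset.subset_insert_iff, ← Finsupp.support_erase, mul_ite, mul_zero,
        Finsupp.mul_prod_erase' t j (fun i k => r i ^ k / k !) (by simp)]

-- The coefficient of `X ^ K` in `X ^ d * exp (r X)`.
def expCoeff (r : ℝ) (d K : ℕ) : ℝ := if d ≤ K then r ^ (K - d) / (K - d)! else 0

lemma jointProd_expCoeff_add (r : ι → ℝ) (d t : ι →₀ ℕ) :
    jointProd (fun i => expCoeff (r i)) d (d + t) = t.prod fun i k => r i ^ k / k ! := by
  have hU : d.support ∪ (d + t).support ⊆ d.support ∪ t.support :=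
    union_subset subset_union_left Finsupp.support_add
  rw [jointProd_eq_prod (by simp [expCoeff]) hU,
    Finsupp.prod_of_support_subset t (subset_union_right (s₁ := d.support)) _ (by simp)]
  exact prod_congr rfl fun i _ => by simp [expCoeff]

lemma hasSum_jointProd_expCoeff (r : ι → ℝ) (hr : ∀ i, 0 ≤ r i) {S : Finset ι}
    (hS : ∀ i ∉ S, r i = 0) (d : ι →₀ ℕ) :
    HasSum (jointProd (fun i => expCoeff (r i)) d) (Real.exp (∑ i ∈ S, r i)) := by
  have hsupp : ∀ t : ι →₀ ℕ, ¬ t.support ⊆ S → (t.prod fun i k => r i ^ k / k !) = 0 := by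
    intro t ht
    obtain ⟨i, hit, hiS⟩ := not_subset.1 ht
    refine prod_eq_zero hit ?_
    dsimp only
    rw [hS i hiS, zero_pow (Finsupp.mem_support_iff.1 hit), zero_div]
  rw [Real.exp_sum]
  refine ((add_right_injective d).hasSum_iff fun m hm => ?_).1 ?_
  · refine jointProd_eq_zero (fun i A K h => if_neg (not_le.2 h)) fun hdm => hm ⟨m - d, ?_⟩
    exact add_tsub_cancel_of_le hdm
  · convert hasSum_prod_pow_div_factorial r hr S using 2 with t
    rw [Function.comp_apply, jointProd_expCoeff_add]
    split_ifs with ht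
    exacts [rfl, hsupp t ht]

end

-- The coefficient of `X ^ A` in `(X + c) ^ K`.
def transCoeff (c : ℝ) (A K : ℕ) : ℝ := K.choose A * c ^ (K - A)

lemma weight_mul_transCoeff_mul_expCoeff (c : ℝ) {ρ : ℝ} (hρ : ρ ≠ 0) {A B K x : ℕ}
    (hA : A ≤ K) (hB : B ≤ K) (hx : x ≤ A) :
    ρ ^ x * x ! * transCoeff c x A * transCoeff c x B * expCoeff (c ^ 2 / ρ) (A + B - x) K =
      c ^ (K - A) * c ^ (K - B) * ρ ^ A * ρ ^ B * A ! / (ρ ^ K * (K - B)!) *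
        (B.choose x * (K - B).choose (A - x)) := by
  rcases lt_or_ge B x with hxB | hxB
  · simp [transCoeff, Nat.choose_eq_zero_of_lt hxB]
  rcases lt_or_ge K (A + B - x) with hK | hK
  · rw [expCoeff, if_neg (not_le.2 hK), Nat.choose_eq_zero_of_lt (by omega : K - B < A - x)]
    simp
  obtain ⟨a, rfl⟩ := Nat.exists_eq_add_of_le hx
  obtain ⟨b, rfl⟩ := Nat.exists_eq_add_of_le hxB
  have h1 : x + a + (x + b) - x = x + a + b := by omega
  rw [h1] at hK ⊢
  obtain ⟨e, rfl⟩ := Nat.exists_eq_add_of_le hK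
  have h2 : x + a + b + e - (x + a) = b + e := by omega
  have h3 : x + a + b + e - (x + b) = a + e := by omega
  simp only [transCoeff, expCoeff, h2, h3, if_pos le_self_add, Nat.cast_add_choose,
    add_tsub_cancel_left, div_pow]
  field_simp
  ring

-- Summed over `K` this is `⟨e^{cX/ρ} X^A, e^{cX/ρ} X^B⟩ = e^{c²/ρ} ⟨(X+c)^A, (X+c)^B⟩` for
-- `‖X^k‖² = ρ^k k!`, the one-mode case of `T_c E = e^κ E T_c`.
lemma transCoeff_mul_transCoeff (c : ℝ) {ρ : ℝ} (hρ : ρ ≠ 0) (A B K : ℕ) :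
    transCoeff c A K * transCoeff c B K * (ρ ^ A * A ! * (ρ ^ B * B !)) / (ρ ^ K * K !) =
      ∑ x ∈ Iic A, ρ ^ x * x ! * transCoeff c x A * transCoeff c x B *
        expCoeff (c ^ 2 / ρ) (A + B - x) K := by
  by_cases hAB : A ≤ K ∧ B ≤ K
  · obtain ⟨hA, hB⟩ := hAB
    rw [sum_congr rfl fun x hx => weight_mul_transCoeff_mul_expCoeff c hρ hA hB (mem_Iic.1 hx),
      ← mul_sum, ← Nat.range_succ_eq_Iic]
    have hvand : ∑ x ∈ range (A + 1), (B.choose x * (K - B).choose (A - x) : ℝ) = K.choose A := by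
      have := Nat.add_choose_eq B (K - B) A
      rw [Nat.add_sub_cancel' hB, Finset.Nat.sum_antidiagonal_eq_sum_range_succ_mk] at this
      exact_mod_cast this.symm
    rw [hvand, transCoeff, transCoeff, Nat.cast_choose ℝ hA, Nat.cast_choose ℝ hB]
    field_simp
  · have hzero : transCoeff c A K * transCoeff c B K = 0 := by
      rcases not_and_or.1 hAB with h | h <;>
        simp [transCoeff, Nat.choose_eq_zero_of_lt (not_le.1 h)]
    rw [hzero, zero_mul, zero_div, eq_comm]
    refine sum_eq_zero fun x hx => ?_
    rcases le_or_gt x B with hxB | hxB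
    · rw [expCoeff, if_neg (by have := mem_Iic.1 hx; omega), mul_zero]
    · simp [transCoeff, Nat.choose_eq_zero_of_lt hxB]

def modeWeight (i k : ℕ) : ℝ := ((i : ℝ) + 1) ^ k * k !

lemma wMon_eq_prod {m : ℕ →₀ ℕ} {U : Finset ℕ} (h : m.support ⊆ U) :
    wMon m = ∏ i ∈ U, modeWeight i (m i) :=
  Finsupp.prod_of_support_subset m h (fun i k => modeWeight i k) fun i _ => by simp [modeWeight]

lemma wMon_pos (m : ℕ →₀ ℕ) : 0 < wMon m :=
  prod_pos fun i _ => by positivity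

def transCoeffs (c : ℕ → ℝ) : (ℕ →₀ ℕ) → (ℕ →₀ ℕ) → ℝ := jointProd fun i => transCoeff (c i)

def expCoeffs (r : ℕ → ℝ) : (ℕ →₀ ℕ) → (ℕ →₀ ℕ) → ℝ := jointProd fun i => expCoeff (r i)

lemma transCoeffs_eq_prod (c : ℕ → ℝ) {x m : ℕ →₀ ℕ} {U : Finset ℕ}
    (h : x.support ∪ m.support ⊆ U) :
    transCoeffs c x m = ∏ i ∈ U, transCoeff (c i) (x i) (m i) :=
  jointProd_eq_prod (by simp [transCoeff]) h

lemma expCoeffs_eq_prod (r : ℕ → ℝ) {d m : ℕ →₀ ℕ} {U : Finset ℕ}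
    (h : d.support ∪ m.support ⊆ U) :
    expCoeffs r d m = ∏ i ∈ U, expCoeff (r i) (d i) (m i) :=
  jointProd_eq_prod (by simp [expCoeff]) h

lemma transCoeffs_mul_transCoeffs (c : ℕ → ℝ) (a b m : ℕ →₀ ℕ) :
    transCoeffs c a m * transCoeffs c b m * (wMon a * wMon b) / wMon m =
      ∑ x ∈ Iic a, wMon x * transCoeffs c x a * transCoeffs c x b *
        expCoeffs (fun i => c i ^ 2 / (i + 1)) (a + b - x) m := by
  set U := a.support ∪ b.support ∪ m.support
  have ha : a.support ⊆ U := subset_union_left.trans subset_union_left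
  have hb : b.support ⊆ U := subset_union_right.trans subset_union_left
  have hm : m.support ⊆ U := subset_union_right
  rw [transCoeffs_eq_prod c (union_subset ha hm), transCoeffs_eq_prod c (union_subset hb hm),
    wMon_eq_prod ha, wMon_eq_prod hb, wMon_eq_prod hm, ← prod_mul_distrib, ← prod_mul_distrib,
    ← prod_mul_distrib, ← prod_div_distrib]
  simp only [modeWeight]
  rw [prod_congr rfl fun i _ => transCoeff_mul_transCoeff (c i) (by positivity) (a i) (b i) (m i),
    prod_sum_Iic_eq_sum_Iic_prod _ ha]
  refine sum_congr rfl fun x hx => ?_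
  have hx : x.support ⊆ U := (Finsupp.support_mono (mem_Iic.1 hx)).trans ha
  have hd : (a + b - x).support ⊆ U :=
    Finsupp.support_tsub.trans (Finsupp.support_add.trans (union_subset ha hb))
  rw [wMon_eq_prod hx, transCoeffs_eq_prod c (union_subset hx ha),
    transCoeffs_eq_prod c (union_subset hx hb), expCoeffs_eq_prod _ (union_subset hd hm),
    ← prod_mul_distrib, ← prod_mul_distrib, ← prod_mul_distrib]
  simp [modeWeight]

lemma transCoeffs_eq_zero (c : ℕ → ℝ) {x m : ℕ →₀ ℕ} (h : ¬ x ≤ m) : transCoeffs c x m = 0 :=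
  jointProd_eq_zero (fun i A K hK => by simp [transCoeff, Nat.choose_eq_zero_of_lt hK]) h

def varShift (c : ℕ → ℝ) : FockPoly →ₐ[ℝ] FockPoly := aeval fun i => X i + C (c i)

lemma varShift_monomial (c : ℕ → ℝ) (m : ℕ →₀ ℕ) :
    varShift c (monomial m 1) = ∑ x ∈ Iic m, monomial x (transCoeffs c x m) := by
  have hpow : ∀ i n, (X i + C (c i) : FockPoly) ^ n =
      ∑ k ∈ Iic n, monomial (Finsupp.single i k) (transCoeff (c i) k n) := fun i n => by
    rw [add_pow, ← Nat.range_succ_eq_Iic]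
    refine sum_congr rfl fun k _ => ?_
    rw [X_pow_eq_monomial, ← C_pow, ← map_natCast C, mul_assoc, ← C_mul, mul_comm,
      C_mul_monomial, mul_one, transCoeff, mul_comm]
  rw [varShift, aeval_monomial, map_one, one_mul, Finsupp.prod]
  simp_rw [hpow]
  rw [prod_sum_Iic_eq_sum_Iic_prod _ subset_rfl]
  refine sum_congr rfl fun x hx => ?_
  have hxm : x.support ⊆ m.support := Finsupp.support_mono (mem_Iic.1 hx)
  rw [← monomial_sum_prod, ← transCoeffs_eq_prod c (union_subset hxm subset_rfl),
    ← Finsupp.sum_of_support_subset x hxm _ (fun i _ => Finsupp.single_zero i), Finsupp.sum_single]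

lemma coeff_varShift_monomial (c : ℕ → ℝ) (x m : ℕ →₀ ℕ) :
    coeff x (varShift c (monomial m 1)) = transCoeffs c x m := by
  rw [varShift_monomial, coeff_sum]
  simp only [coeff_monomial, sum_ite_eq', mem_Iic]
  split_ifs with h
  exacts [rfl, (transCoeffs_eq_zero c h).symm]

lemma varShift_varShift (c d : ℕ → ℝ) (f : FockPoly) :
    varShift c (varShift d f) = varShift (c + d) f := by
  have : (varShift c).comp (varShift d) = varShift (c + d) :=
    algHom_ext fun i => by simp [varShift, add_assoc]
  exact DFunLike.congr_fun this f

lemma ipF_eq_sum_right {f g : FockPoly} {U : Finset (ℕ →₀ ℕ)} (h : g.support ⊆ U) :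
    ipF f g = ∑ m ∈ U, coeff m f * coeff m g * wMon m := by
  refine finsum_eq_finsetSum_of_support_subset _ fun m hm => h ?_
  rw [Function.mem_support] at hm
  exact mem_support_iff.2 fun h0 => hm (by rw [h0, mul_zero, zero_mul])

lemma ipF_comm (f g : FockPoly) : ipF f g = ipF g f :=
  finsum_congr fun m => by ring

lemma ipF_eq_sum_left {f g : FockPoly} {U : Finset (ℕ →₀ ℕ)} (h : f.support ⊆ U) :
    ipF f g = ∑ m ∈ U, coeff m f * coeff m g * wMon m := by
  rw [ipF_comm, ipF_eq_sum_right h]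
  exact sum_congr rfl fun m _ => by ring

def ipFₗ : FockPoly →ₗ[ℝ] FockPoly →ₗ[ℝ] ℝ :=
  LinearMap.mk₂ ℝ ipF
    (fun f f' g => by simp only [ipF_eq_sum_right subset_rfl, coeff_add, add_mul, sum_add_distrib])
    (fun a f g => by simp only [ipF_eq_sum_right subset_rfl, coeff_smul, smul_eq_mul, mul_sum,
      mul_assoc])
    (fun f g g' => by simp only [ipF_eq_sum_left subset_rfl, coeff_add, mul_add, add_mul,
      sum_add_distrib])
    (fun a f g => by
      simp only [ipF_eq_sum_left subset_rfl, coeff_smul, smul_eq_mul, mul_sum]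
      exact sum_congr rfl fun m _ => by ring)

lemma ipF_self_nonneg (f : FockPoly) : 0 ≤ ipF f f := by
  rw [ipF_eq_sum_left subset_rfl]
  exact sum_nonneg fun m _ => mul_nonneg (mul_self_nonneg _) (wMon_pos m).le

lemma sum_smul_monomial (f : FockPoly) : ∑ a ∈ f.support, coeff a f • monomial a (1 : ℝ) = f := by
  conv_rhs => rw [f.as_sum]
  simp only [smul_monomial, smul_eq_mul, mul_one]

lemma ipF_varShift_right (c : ℕ → ℝ) (f g : FockPoly) :
    ipF f (varShift c g) = ∑ b ∈ g.support, coeff b g * ipF f (varShift c (monomial b 1)) := by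
  conv_lhs => rw [← sum_smul_monomial g]
  change ipFₗ f _ = _
  simp only [map_sum, map_smul, smul_eq_mul]
  rfl

lemma ipF_varShift_eq_sum (c : ℕ → ℝ) (f g : FockPoly) :
    ipF (varShift c f) (varShift c g) = ∑ a ∈ f.support, ∑ b ∈ g.support,
      coeff a f * coeff b g * ipF (varShift c (monomial a 1)) (varShift c (monomial b 1)) := by
  rw [ipF_varShift_right, sum_comm]
  refine sum_congr rfl fun a _ => ?_
  rw [ipF_comm, ipF_varShift_right, mul_sum]
  exact sum_congr rfl fun b _ => by rw [ipF_comm]; ring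

lemma ipF_varShift_monomial_right (c : ℕ → ℝ) (f : FockPoly) (m : ℕ →₀ ℕ) :
    ipF f (varShift c (monomial m 1)) =
      ∑ a ∈ f.support, coeff a f * wMon a * transCoeffs c a m := by
  rw [ipF_eq_sum_left subset_rfl]
  exact sum_congr rfl fun a _ => by rw [coeff_varShift_monomial]; ring

lemma ipF_varShift_monomial (c : ℕ → ℝ) (a b : ℕ →₀ ℕ) :
    ipF (varShift c (monomial a 1)) (varShift c (monomial b 1)) =
      ∑ x ∈ Iic a, wMon x * transCoeffs c x a * transCoeffs c x b := by
  have hsupp : (varShift c (monomial a 1)).support ⊆ Iic a := fun x hx => by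
    rw [mem_support_iff, coeff_varShift_monomial] at hx
    exact mem_Iic.2 (not_not.1 (mt (transCoeffs_eq_zero c) hx))
  rw [ipF_eq_sum_left hsupp]
  exact sum_congr rfl fun x _ => by rw [coeff_varShift_monomial, coeff_varShift_monomial]; ring

lemma hasSum_transCoeffs_mul (c : ℕ → ℝ) {S : Finset ℕ} (hS : ∀ i ∉ S, c i = 0)
    (a b : ℕ →₀ ℕ) :
    HasSum (fun m => transCoeffs c a m * transCoeffs c b m * (wMon a * wMon b) / wMon m)
      (Real.exp (∑ i ∈ S, c i ^ 2 / (i + 1)) *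
        ipF (varShift c (monomial a 1)) (varShift c (monomial b 1))) := by
  simp only [transCoeffs_mul_transCoeffs]
  rw [ipF_varShift_monomial, mul_sum]
  refine hasSum_sum fun x _ => ?_
  rw [mul_comm (Real.exp _)]
  exact (hasSum_jointProd_expCoeff _ (fun i => by positivity)
    (fun i hi => by simp [hS i hi]) _).mul_left _

lemma hasSum_ipF_varShift_monomial (c : ℕ → ℝ) {S : Finset ℕ} (hS : ∀ i ∉ S, c i = 0)
    (f g : FockPoly) :
    HasSum (fun m => ipF f (varShift c (monomial m 1)) * ipF g (varShift c (monomial m 1)) / wMon m)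
      (Real.exp (∑ i ∈ S, c i ^ 2 / (i + 1)) * ipF (varShift c f) (varShift c g)) := by
  have hexpand : ∀ m, ipF f (varShift c (monomial m 1)) * ipF g (varShift c (monomial m 1)) / wMon m
      = ∑ a ∈ f.support, ∑ b ∈ g.support, coeff a f * coeff b g *
          (transCoeffs c a m * transCoeffs c b m * (wMon a * wMon b) / wMon m) := fun m => by
    rw [ipF_varShift_monomial_right, ipF_varShift_monomial_right, sum_mul_sum, sum_div]
    exact sum_congr rfl fun a _ => by rw [sum_div]; exact sum_congr rfl fun b _ => by ring
  simp only [hexpand]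
  rw [ipF_varShift_eq_sum, mul_sum]
  refine hasSum_sum fun a _ => ?_
  rw [mul_sum]
  refine hasSum_sum fun b _ => ?_
  rw [mul_left_comm]
  exact (hasSum_transCoeffs_mul c hS a b).mul_left _

-- Variable `i` stands for `p_{i+1}`, so the even indices are the odd modes.
def oddModes (M : ℕ) : Finset ℕ := (range M).filter fun i => Even i

def oddShift (M : ℕ) (s : ℝ) (i : ℕ) : ℝ := if i ∈ oddModes M then s else 0

lemma lowerB_apply (M : ℕ) (f : FockPoly) : lowerB M f = ∑ i ∈ oddModes M, pderiv i f := by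
  rw [lowerB, LinearMap.sum_apply]
  rfl

lemma sum_add_one_le_of_mem_support_lowerB {M : ℕ} {f : FockPoly} {m : ℕ →₀ ℕ}
    (hm : m ∈ (lowerB M f).support) : (m.sum fun _ e => e) + 1 ≤ f.totalDegree := by
  rw [lowerB_apply] at hm
  obtain ⟨i, -, hi⟩ := mem_biUnion.1 (support_sum hm)
  rw [mem_support_iff, coeff_pderiv] at hi
  have := le_totalDegree (mem_support_iff.2 (left_ne_zero_of_mul hi))
  rwa [Finsupp.sum_add_index' (fun _ => rfl) (fun _ _ _ => rfl), Finsupp.sum_single_index rfl]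
    at this

lemma sum_add_le_of_mem_support_lowerB_pow {M : ℕ} {f : FockPoly} {m : ℕ →₀ ℕ} {j : ℕ}
    (hm : m ∈ ((lowerB M ^ j) f).support) : (m.sum fun _ e => e) + j ≤ f.totalDegree := by
  induction j generalizing m with
  | zero => exact le_totalDegree hm
  | succ j ih =>
    rw [pow_succ', Module.End.mul_apply] at hm
    have hdeg : ((lowerB M ^ j) f).totalDegree ≤ f.totalDegree - j :=
      Finset.sup_le fun m' hm' => by have := ih hm'; omega
    have := sum_add_one_le_of_mem_support_lowerB hm
    omega

lemma lowerB_pow_eq_zero (M : ℕ) {f : FockPoly} {j : ℕ} (h : f.totalDegree < j) :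
    (lowerB M ^ j) f = 0 := by
  rw [← support_eq_empty, Finset.eq_empty_iff_forall_notMem]
  intro m hm
  have := sum_add_le_of_mem_support_lowerB_pow hm
  omega

lemma expB_eq_sum (M : ℕ) (s : ℝ) {f : FockPoly} {N : ℕ} (h : f.totalDegree < N) :
    expB M s f = ∑ j ∈ range N, ((j ! : ℝ)⁻¹ * s ^ j) • (lowerB M ^ j) f := by
  refine sum_subset (range_subset_range.2 h) fun j _ hj => ?_
  rw [lowerB_pow_eq_zero M (by simpa using hj), smul_zero]

lemma expB_add (M : ℕ) (s : ℝ) (f g : FockPoly) :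
    expB M s (f + g) = expB M s f + expB M s g := by
  obtain ⟨N, hf, hg, hfg⟩ : ∃ N, f.totalDegree < N ∧ g.totalDegree < N ∧ (f + g).totalDegree < N :=
    ⟨f.totalDegree + g.totalDegree + 1, by omega, by omega,
      by have := totalDegree_add f g; omega⟩
  rw [expB_eq_sum M s hfg, expB_eq_sum M s hf, expB_eq_sum M s hg, ← sum_add_distrib]
  simp only [map_add, smul_add]

lemma lowerB_mul_X (M : ℕ) (p : FockPoly) (i : ℕ) :
    lowerB M (p * X i) = lowerB M p * X i + oddShift M 1 i • p := by
  simp only [lowerB_apply, pderiv_mul, sum_add_distrib, sum_mul, pderiv_X, ← mul_sum,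
    sum_pi_single, oddShift]
  split_ifs <;> simp

lemma lowerB_pow_mul_X (M : ℕ) (p : FockPoly) (i j : ℕ) :
    (lowerB M ^ (j + 1)) (p * X i) =
      (lowerB M ^ (j + 1)) p * X i + ((j + 1) * oddShift M 1 i) • (lowerB M ^ j) p := by
  induction j with
  | zero => simpa using lowerB_mul_X M p i
  | succ j ih =>
    rw [pow_succ', Module.End.mul_apply, ih, map_add, lowerB_mul_X, map_smul,
      ← Module.End.mul_apply, ← pow_succ', ← Module.End.mul_apply, ← pow_succ', add_assoc,
      ← add_smul]
    push_cast
    ring_nf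

lemma expB_mul_X (M : ℕ) (s : ℝ) (p : FockPoly) (i : ℕ) :
    expB M s (p * X i) = expB M s p * (X i + C (oddShift M s i)) := by
  set N := p.totalDegree + 1
  set a : ℕ → ℝ := fun j => (j ! : ℝ)⁻¹ * s ^ j
  have hdeg : (p * X i).totalDegree < N + 1 := by
    have := totalDegree_mul p (X i); rw [totalDegree_X] at this; omega
  have hcoeff : ∀ j : ℕ, a (j + 1) * ((j + 1) * oddShift M 1 i) = a j * oddShift M s i :=
    fun j => by
      simp only [a, oddShift, Nat.factorial_succ]
      push_cast
      split_ifs <;> field_simp <;> ring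
  calc expB M s (p * X i)
      = ∑ j ∈ range N, a (j + 1) • (lowerB M ^ (j + 1)) (p * X i) + p * X i := by
        rw [expB_eq_sum M s hdeg, sum_range_succ']; simp [a]
    _ = ∑ j ∈ range N, (a (j + 1) • ((lowerB M ^ (j + 1)) p * X i) +
          (a j * oddShift M s i) • (lowerB M ^ j) p) + p * X i := by
        simp only [lowerB_pow_mul_X, smul_add, smul_smul, hcoeff]
    _ = (∑ j ∈ range (N + 1), a j • (lowerB M ^ j) p) * X i +
          (∑ j ∈ range N, a j • (lowerB M ^ j) p) * C (oddShift M s i) := by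
        rw [sum_add_distrib, sum_range_succ' _ N, add_mul, sum_mul, sum_mul, add_right_comm]
        simp [a, mul_comm _ (C _), C_mul', smul_smul]
    _ = expB M s p * (X i + C (oddShift M s i)) := by
        rw [mul_add, ← expB_eq_sum M s (by omega), ← expB_eq_sum M s (by omega)]

lemma expB_eq_varShift (M : ℕ) (s : ℝ) (f : FockPoly) :
    expB M s f = varShift (oddShift M s) f := by
  induction f using MvPolynomial.induction_on with
  | C a => simp [expB, varShift]
  | add p q hp hq => rw [expB_add, hp, hq, map_add]
  | mul_X p i hp => rw [expB_mul_X, hp, map_mul, varShift, aeval_X]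

lemma varShift_oddShift_cancel (M : ℕ) {s t : ℝ} (hst : s + t = 0) (f : FockPoly) :
    varShift (oddShift M s) (varShift (oddShift M t) f) = f := by
  have : oddShift M s + oddShift M t = fun i => 0 := by
    funext i; simp only [Pi.add_apply, oddShift]; split_ifs <;> simp [hst]
  rw [varShift_varShift, this]
  simp [varShift]

lemma sum_inv_oddModes_eq_cM {M : ℕ} (hM : 1 ≤ M) :
    ∑ i ∈ oddModes M, (1 : ℝ) / (i + 1) = cM M := by
  refine sum_nbij' (fun i => i / 2) (fun n => 2 * n) ?_ ?_ ?_ ?_ ?_ <;>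
    simp only [oddModes, mem_filter, mem_range, Nat.even_iff]
  · intro i hi; omega
  · intro n hn; omega
  · intro i hi; omega
  · intro n hn; omega
  · intro i hi
    rw [show ((i : ℕ) : ℝ) = 2 * ((i / 2 : ℕ) : ℝ) by norm_cast; omega]

lemma sum_oddShift_sq_eq_cM {M : ℕ} (hM : 1 ≤ M) {s : ℝ} (hs : s ^ 2 = 1) :
    ∑ i ∈ oddModes M, oddShift M s i ^ 2 / (i + 1) = cM M := by
  rw [← sum_inv_oddModes_eq_cM hM]
  exact sum_congr rfl fun i hi => by rw [oddShift, if_pos hi, hs]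

lemma oddShift_eq_zero (M : ℕ) (s : ℝ) {i : ℕ} (hi : i ∉ oddModes M) : oddShift M s i = 0 :=
  if_neg hi

lemma hasSum_WM_monomial_right {M : ℕ} (hM : 1 ≤ M) (u v : FockPoly) :
    HasSum (fun m => WM M u (monomial m 1) * WM M v (monomial m 1) / wMon m)
      (Real.exp (cM M) * ipF u v) := by
  have h := hasSum_ipF_varShift_monomial (oddShift M 1) (fun i => oddShift_eq_zero M 1)
    (expB M (-1) u) (expB M (-1) v)
  simp only [expB_eq_varShift, varShift_oddShift_cancel M (add_neg_cancel 1),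
    sum_oddShift_sq_eq_cM hM (one_pow 2)] at h
  simpa only [WM, expB_eq_varShift] using h

lemma hasSum_WM_monomial_left {M : ℕ} (hM : 1 ≤ M) (u v : FockPoly) :
    HasSum (fun m => WM M (monomial m 1) u * WM M (monomial m 1) v / wMon m)
      (Real.exp (cM M) * ipF u v) := by
  have h := hasSum_ipF_varShift_monomial (oddShift M (-1)) (fun i => oddShift_eq_zero M (-1))
    (expB M 1 u) (expB M 1 v)
  simp only [expB_eq_varShift, varShift_oddShift_cancel M (neg_add_cancel 1),
    sum_oddShift_sq_eq_cM hM (by norm_num : (-1 : ℝ) ^ 2 = 1)] at h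
  simpa only [WM, expB_eq_varShift, ipF_comm (varShift (oddShift M (-1)) _)] using h

lemma WM_eq_sum (M : ℕ) (u v : FockPoly) :
    WM M u v = ∑ m ∈ v.support, coeff m v * WM M u (monomial m 1) := by
  rw [WM, expB_eq_varShift M 1, ipF_varShift_right]
  simp only [WM, expB_eq_varShift]

lemma sq_WM_le {M : ℕ} (hM : 1 ≤ M) (u v : FockPoly) :
    WM M u v ^ 2 ≤ Real.exp (cM M) * ipF u u * ipF v v := by
  have hcs := sum_sq_le_sum_mul_sum_of_sq_le_mul v.support
    (r := fun m => coeff m v * WM M u (monomial m 1))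
    (f := fun m => WM M u (monomial m 1) * WM M u (monomial m 1) / wMon m)
    (g := fun m => coeff m v * coeff m v * wMon m)
    (fun m _ => div_nonneg (mul_self_nonneg _) (wMon_pos m).le)
    (fun m _ => mul_nonneg (mul_self_nonneg _) (wMon_pos m).le)
    (fun m _ => le_of_eq (by have := (wMon_pos m).ne'; field_simp))
  have hle := sum_le_hasSum v.support (fun m _ => div_nonneg (mul_self_nonneg _) (wMon_pos m).le)
    (hasSum_WM_monomial_right hM u u)
  rw [← WM_eq_sum, ← ipF_eq_sum_left subset_rfl] at hcs
  exact hcs.trans (mul_le_mul_of_nonneg_right hle (ipF_self_nonneg v))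

/-- `(W^{[M]}†)⁻¹ = exp(-∑ 1/(2n+1)) W^{[M]}`, i.e. `W†W = WW† = e^{c} · Id`
(expressed through matrix elements against the orthogonal monomial basis);
consequently every matrix element of `W^{[M]}` between unit vectors is bounded by
`exp((1/2) ∑_{n=0}^{⌊(M-1)/2⌋} 1/(2n+1))`. -/
theorem stmt19 (M : ℕ) (hM : 1 ≤ M) :
    (∀ u v : FockPoly,
      ∑' m : ℕ →₀ ℕ,
          WM M u (MvPolynomial.monomial m 1) * WM M v (MvPolynomial.monomial m 1) / wMon m =
        Real.exp (cM M) * ipF u v) ∧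
    (∀ u v : FockPoly,
      ∑' m : ℕ →₀ ℕ,
          WM M (MvPolynomial.monomial m 1) u * WM M (MvPolynomial.monomial m 1) v / wMon m =
        Real.exp (cM M) * ipF u v) ∧
    (∀ u v : FockPoly,
      |WM M u v| ≤ Real.exp (cM M / 2) * Real.sqrt (ipF u u) * Real.sqrt (ipF v v)) := by
  refine ⟨fun u v => (hasSum_WM_monomial_right hM u v).tsum_eq,
    fun u v => (hasSum_WM_monomial_left hM u v).tsum_eq, fun u v => ?_⟩
  calc |WM M u v| ≤ Real.sqrt (Real.exp (cM M) * ipF u u * ipF v v) :=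
        Real.abs_le_sqrt (sq_WM_le hM u v)
    _ = Real.exp (cM M / 2) * Real.sqrt (ipF u u) * Real.sqrt (ipF v v) := by
        rw [Real.sqrt_mul (by positivity [ipF_self_nonneg u]), Real.sqrt_mul (Real.exp_nonneg _),
          Real.exp_half]

end
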